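/- With the 3-SAT construction of π_1, π_2 as described, suppose z_1, z_2 are natural numbers such that π_1^{z_1} π_2^{z_2} is fixpoint-free. Then for all i ∈ [n] we have z_1 ≢ 0 mod p_i and z_1 ≢ 0 mod p̄_i. -/

import Mathlib

/-! 3-SAT construction.  Variables are `x_1, …, x_n`, indexed by `Fin n`; the `j`-th clause is
`C_j = {x̃_{idx j 0}, x̃_{idx j 1}, x̃_{idx j 2}}` with `idx j` strictly monotone, where the
literal on variable `idx j a` is negated iff `neg j a = true`.  The first `2n` primes are
`p_1, …, p_n, p̄_1, …, p̄_n` with `p_i = P (i-1)` and `p̄_i = P (n+i-1)` for the enumeration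
`P` of the primes (`P 0 = 2`).  Every `Sym(ℓ)`-component is realized on `Fin ℓ`, and the
`ℓ`-cycle `([ℓ]) = (1,2,…,ℓ)` is realized as `finRotate ℓ`.  Fixpoint-freeness is checked on
the disjoint union of all components. -/

namespace SatConstruction

/-- `P i` is the `(i+1)`-st prime: `P 0 = 2`, `P 1 = 3`, ….  The prime `p_i` associated with
the positive literal `x_i` is `P (i-1)` and the prime `p̄_i` associated with the negative
literal `x̄_i` is `P (n+i-1)` (with `i ∈ [n]` one-indexed). -/
noncomputable def P (i : ℕ) : ℕ := Nat.nth Nat.Prime i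

/-- `p̃` of a literal: the prime of the underlying variable, according to the sign. -/
noncomputable def ptil (n : ℕ) {m : ℕ} (idx : Fin m → Fin 3 → Fin n)
    (neg : Fin m → Fin 3 → Bool) (j : Fin m) (a : Fin 3) : ℕ :=
  if neg j a then P (n + (idx j a).val) else P (idx j a).val

/-- `r_j = p̃_{i_1} p̃_{i_2} p̃_{i_3}` for the clause `C_j`. -/
noncomputable def r (n : ℕ) {m : ℕ} (idx : Fin m → Fin 3 → Fin n)
    (neg : Fin m → Fin 3 → Bool) (j : Fin m) : ℕ :=
  ptil n idx neg j 0 * ptil n idx neg j 1 * ptil n idx neg j 2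

/-- The underlying set of the group
`G = ∏_{i=1}^n (Sym(p_i) × Sym(p̄_i) × Sym(p_i p̄_i)^{(p_i-1)(p̄_i-1)+1}) × ∏_{j=1}^m Sym(r_j)`
(embedded in a symmetric group).  The `(p_i-1)(p̄_i-1)+1` copies of `Sym(p_i p̄_i)` are
indexed by `Option (Fin (p_i - 1) × Fin (p̄_i - 1))`: `none` is the component of `α_{i,3}`
and `some (l-1, k-1)` is the component of `α_{i,l,k}`. -/
abbrev Omega (n : ℕ) {m : ℕ} (idx : Fin m → Fin 3 → Fin n)
    (neg : Fin m → Fin 3 → Bool) : Type :=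
  (Σ i : Fin n,
      (Fin (P i.val) ⊕ Fin (P (n + i.val))) ⊕
        (Σ _c : Option (Fin (P i.val - 1) × Fin (P (n + i.val) - 1)),
          Fin (P i.val * P (n + i.val)))) ⊕
    (Σ j : Fin m, Fin (r n idx neg j))

/-- `π_1 = (α_1,…,α_n,β_1,…,β_m)` with
`α_i = (α_{i,1}, α_{i,2}, α_{i,3}, α_{i,1,1}, …, α_{i,p_i-1,p̄_i-1})`,
`α_{i,1} = ([p_i])`, `α_{i,2} = ([p̄_i])`, `α_{i,3} = id`,
`α_{i,l,k} = ([p_i p̄_i])^{s_{i,l,k}}` and `β_j = id`. -/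
noncomputable def pi1 (n : ℕ) {m : ℕ} (idx : Fin m → Fin 3 → Fin n)
    (neg : Fin m → Fin 3 → Bool) (s : Fin n → ℕ → ℕ → ℕ) :
    Equiv.Perm (Omega n idx neg) :=
  Equiv.sumCongr
    (Equiv.sigmaCongrRight fun i =>
      Equiv.sumCongr
        (Equiv.sumCongr (finRotate _) (finRotate _))
        (Equiv.sigmaCongrRight fun c =>
          match c with
          | none => Equiv.refl _
          | some (l, k) =>
              finRotate (P i.val * P (n + i.val)) ^ s i (l.val + 1) (k.val + 1)))
    (Equiv.refl _)

/-- `π_2 = (γ_1,…,γ_n,δ_1,…,δ_m)` with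
`γ_i = (γ_{i,1}, γ_{i,2}, γ_{i,3}, γ_{i,1,1}, …, γ_{i,p_i-1,p̄_i-1})`,
`γ_{i,1} = γ_{i,2} = id`, `γ_{i,3} = γ_{i,l,k} = ([p_i p̄_i])` and `δ_j = ([r_j])`. -/
noncomputable def pi2 (n : ℕ) {m : ℕ} (idx : Fin m → Fin 3 → Fin n)
    (neg : Fin m → Fin 3 → Bool) :
    Equiv.Perm (Omega n idx neg) :=
  Equiv.sumCongr
    (Equiv.sigmaCongrRight fun _i =>
      Equiv.sumCongr (Equiv.refl _) (Equiv.sigmaCongrRight fun _c => finRotate _))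
    (Equiv.sigmaCongrRight fun j => finRotate (r n idx neg j))

open Equiv Function

theorem _root_.Function.Semiconj.perm_pow_apply {α β : Type*} {σ : Perm α} {τ : Perm β}
    {f : α → β} (h : Semiconj f σ τ) (k : ℕ) (x : α) : (τ ^ k) (f x) = f ((σ ^ k) x) := by
  simp only [← Perm.iterate_eq_pow]
  exact (h.iterate_right k x).symm

theorem _root_.orderOf_finRotate_of_le {q : ℕ} (hq : 2 ≤ q) : orderOf (finRotate q) = q := by
  rw [← Perm.lcm_cycleType, cycleType_finRotate_of_le hq, Multiset.lcm_singleton, normalize_eq]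

theorem _root_.finRotate_pow_eq_one_of_dvd {q z : ℕ} (hq : 2 ≤ q) (h : q ∣ z) :
    finRotate q ^ z = 1 :=
  orderOf_dvd_iff_pow_eq_one.mp ((orderOf_finRotate_of_le hq).symm ▸ h)

theorem not_dvd_of_forall_pow_mul_pow_apply_ne {β : Type*} {π₁ π₂ : Perm β} {q z₁ z₂ : ℕ}
    (hq : 2 ≤ q) (f : Fin q → β) (h₁ : Semiconj f (finRotate q) π₁) (h₂ : ∀ x, π₂ (f x) = f x)
    (hfpf : ∀ a, (π₁ ^ z₁ * π₂ ^ z₂) a ≠ a) : ¬ q ∣ z₁ := by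
  intro hdvd
  let x : Fin q := ⟨0, by omega⟩
  apply hfpf (f x)
  rw [Perm.mul_apply, Perm.pow_apply_eq_self_of_apply_eq_self (h₂ x), h₁.perm_pow_apply,
    finRotate_pow_eq_one_of_dvd hq hdvd, Perm.one_apply]

theorem z1_not_dvd_general
    (n m : ℕ) (idx : Fin m → Fin 3 → Fin n)
    (neg : Fin m → Fin 3 → Bool)
    (s : Fin n → ℕ → ℕ → ℕ)
    (z1 z2 : ℕ)
    (hfpf : ∀ a : Omega n idx neg,
      (pi1 n idx neg s ^ z1 * pi2 n idx neg ^ z2) a ≠ a) :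
    ∀ i : Fin n, ¬ P i.val ∣ z1 ∧ ¬ P (n + i.val) ∣ z1 := by
  intro i
  -- On the components `Sym(p_i)` and `Sym(p̄_i)`, `π_1` is the full cycle and `π_2` is trivial.
  exact ⟨not_dvd_of_forall_pow_mul_pow_apply_ne (Nat.prime_nth_prime _).two_le
      (fun x => Sum.inl ⟨i, Sum.inl (Sum.inl x)⟩) (fun _ => rfl) (fun _ => rfl) hfpf,
    not_dvd_of_forall_pow_mul_pow_apply_ne (Nat.prime_nth_prime _).two_le
      (fun x => Sum.inl ⟨i, Sum.inl (Sum.inr x)⟩) (fun _ => rfl) (fun _ => rfl) hfpf⟩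

/-- If `π_1^{z_1} π_2^{z_2}` is fixpoint-free then for all `i ∈ [n]` we have
`z_1 ≢ 0 (mod p_i)` and `z_1 ≢ 0 (mod p̄_i)`. -/
theorem z1_not_dvd
    (n m : ℕ) (idx : Fin m → Fin 3 → Fin n) (hidx : ∀ j, StrictMono (idx j))
    (neg : Fin m → Fin 3 → Bool)
    (s : Fin n → ℕ → ℕ → ℕ)
    -- `s_{i,l,k}` is the unique number in `[0, p_i p̄_i - 1]` with `s_{i,l,k} ≡ l (mod p_i)`
    -- and `s_{i,l,k} ≡ k (mod p̄_i)`, for `l ∈ [p_i - 1]` and `k ∈ [p̄_i - 1]`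
    (hs : ∀ i : Fin n, ∀ l k : ℕ, 1 ≤ l → l < P i.val → 1 ≤ k → k < P (n + i.val) →
      s i l k < P i.val * P (n + i.val) ∧
        s i l k % P i.val = l ∧ s i l k % P (n + i.val) = k)
    (z1 z2 : ℕ)
    (hfpf : ∀ a : Omega n idx neg,
      (pi1 n idx neg s ^ z1 * pi2 n idx neg ^ z2) a ≠ a) :
    ∀ i : Fin n, ¬ P i.val ∣ z1 ∧ ¬ P (n + i.val) ∣ z1 :=
  z1_not_dvd_general n m idx neg s z1 z2 hfpf

end SatConstruction
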